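/- Let p,q,r,s be positive integers with gcd(p,q) = gcd(r,s) = 1. If s|p, p|(rq+1), gcd((rq+1)/p, s) = 1, and also q|r, r|(sp+1), gcd((sp+1)/r, q) = 1, then the triangle with vertices (0,0), (p/q, 0), (0, r/s) is pseudo-integral: its Ehrhart function is a polynomial in t. -/

import Mathlib

/-!
Clearing denominators, `ehrhart (q/p) (s/r) t` counts the points `(x, y) ∈ ℕ²` with
`q r x + s p y ≤ p r t`. Going from `t` to `t + q` adds `p` columns, of heights
`⌊(r t + e - 1 + e i) / s⌋ + 1` for `i < p`, where `q r + 1 = p e`. As `s ∣ p` and `e` is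
prime to `s`, the numerators run through every residue class mod `s` exactly `p / s` times, so
the heights add up to a polynomial in `t`: the count minus `trianglePoly` has period `q`.
Symmetrically it has period `s`; since `q` and `s` are coprime it is constant, and it vanishes
at `t = 0`.
-/

noncomputable def ehrhart (u v : ℝ) (t : ℕ) : ℕ :=
  {p : ℕ × ℕ | u * p.1 + v * p.2 ≤ t}.ncard

open Finset

noncomputable def latticeCount (A B N : ℕ) : ℕ :=
  {z : ℕ × ℕ | A * z.1 + B * z.2 ≤ N}.ncard

theorem latticeCount_comm (A B N : ℕ) : latticeCount A B N = latticeCount B A N := by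
  rw [latticeCount, ← Set.ncard_image_of_injective _ Prod.swap_injective,
    Set.image_swap_eq_preimage_swap]
  simp only [latticeCount, Set.preimage_ofPred_eq, Prod.fst_swap, Prod.snd_swap, add_comm]

theorem latticeCount_eq_sum_range {A B : ℕ} (hA : 0 < A) (hB : 0 < B) (N : ℕ) :
    latticeCount A B N = ∑ x ∈ range (N / A + 1), ((N - A * x) / B + 1) := by
  have hset : {z : ℕ × ℕ | A * z.1 + B * z.2 ≤ N} =
      ↑((range (N / A + 1)).biUnion fun x => {x} ×ˢ range ((N - A * x) / B + 1)) := by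
    ext ⟨x, y⟩
    simp only [Set.mem_ofPred_eq, coe_biUnion, coe_range, Set.mem_Iio, coe_product, coe_singleton,
      Set.mem_iUnion, Set.mem_prod, Set.mem_singleton_iff, exists_prop, Nat.lt_succ_iff,
      Nat.le_div_iff_mul_le hA, Nat.le_div_iff_mul_le hB, and_left_comm, exists_eq_left']
    rw [mul_comm x, mul_comm y]
    omega
  rw [latticeCount, hset, Set.ncard_coe_finset, card_biUnion]
  · simp
  · intro x _ x' _ hne
    simp only [disjoint_left, mem_product, mem_singleton]
    exact fun z hz hz' => hne (hz.1.symm.trans hz'.1)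

theorem latticeCount_zero {A B : ℕ} (hA : 0 < A) (hB : 0 < B) : latticeCount A B 0 = 1 := by
  simp [latticeCount_eq_sum_range hA hB]

theorem latticeCount_add {A B : ℕ} (hA : 0 < A) (hB : 0 < B) (N : ℕ) :
    latticeCount A B (N + A) = latticeCount A B N + ((N + A) / B + 1) := by
  rw [latticeCount_eq_sum_range hA hB, latticeCount_eq_sum_range hA hB, Nat.add_div_right _ hA,
    sum_range_succ']
  simp only [mul_zero, Nat.sub_zero, mul_add_one, Nat.add_sub_add_right]

theorem latticeCount_add_mul {A B : ℕ} (hA : 0 < A) (hB : 0 < B) (N k : ℕ) :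
    latticeCount A B (N + k * A)
      = latticeCount A B N + ∑ i ∈ range k, ((N + (i + 1) * A) / B + 1) := by
  induction k with
  | zero => simp
  | succ k ih =>
    rw [add_one_mul, ← add_assoc, latticeCount_add hA hB, ih, sum_range_succ, add_assoc,
      add_one_mul, add_assoc N]

theorem Function.Periodic.eq_of_coprime {α : Type*} {f : ℕ → α} {q s : ℕ}
    (hq : Function.Periodic f q) (hs : Function.Periodic f s) (hqs : q.Coprime s) (t : ℕ) :
    f t = f 0 := by
  obtain ⟨k, hkq, hks⟩ := Nat.chineseRemainder hqs t 0
  rw [← hq.map_mod_nat t, ← hkq, hq.map_mod_nat, ← hs.map_mod_nat, hks, Nat.zero_mod]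

theorem sum_range_add_mul_mod_of_coprime {e s : ℕ} (hes : e.Coprime s) (c : ℕ) :
    ∑ i ∈ range s, (c + e * i) % s = ∑ i ∈ range s, i := by
  have hinj : Set.InjOn (fun i => (c + e * i) % s) (range s) := by
    intro i hi j hj hij
    have := Nat.ModEq.cancel_left_of_coprime (Nat.coprime_comm.mp hes)
      (Nat.ModEq.add_left_cancel' c hij)
    simp only [coe_range, Set.mem_Iio] at hi hj
    rwa [Nat.ModEq, Nat.mod_eq_of_lt hi, Nat.mod_eq_of_lt hj] at this
  have hmaps : ∀ i ∈ range s, (c + e * i) % s ∈ range s := fun i hi =>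
    mem_range.2 (Nat.mod_lt _ (pos_of_ne_zero (by rintro rfl; simp at hi)))
  refine sum_nbij _ hmaps hinj ?_ (fun _ _ => rfl)
  exact surjOn_of_injOn_of_card_le _ hmaps hinj le_rfl

theorem sum_range_mul_add_mul_mod_of_coprime {e s : ℕ} (hes : e.Coprime s) (c m : ℕ) :
    ∑ i ∈ range (m * s), (c + e * i) % s = m * ∑ i ∈ range s, i := by
  induction m with
  | zero => simp
  | succ m ih =>
    rw [add_one_mul, sum_range_add, ih, add_one_mul]
    congr 1
    simp_rw [mul_add, ← add_assoc]
    exact sum_range_add_mul_mod_of_coprime hes _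

theorem mul_sum_range_div_add_eq_sum_of_coprime {e s : ℕ} (hes : e.Coprime s) (c m : ℕ) :
    s * ∑ i ∈ range (m * s), (c + e * i) / s + m * ∑ i ∈ range s, i
      = ∑ i ∈ range (m * s), (c + e * i) := by
  rw [← sum_range_mul_add_mul_mod_of_coprime hes c, mul_sum, ← sum_add_distrib]
  exact sum_congr rfl fun i _ => Nat.div_add_mod _ _

theorem Nat.div_eq_sub_one_of_add_eq_mul {X j p K : ℕ} (h : X + j = p * K) (hj : 0 < j)
    (hjp : j ≤ p) : X / p = K - 1 := by
  refine Nat.div_eq_of_lt_le ?_ ?_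
  · rw [Nat.sub_mul, one_mul, mul_comm]
    omega
  · rw [Nat.sub_add_cancel (Nat.pos_of_mul_pos_left (h ▸ Nat.add_pos_right X hj)), mul_comm]
    omega

theorem ehrhart_div_div (p q r s t : ℕ) (hp : 0 < p) (hr : 0 < r) :
    ehrhart ((q : ℝ) / p) ((s : ℝ) / r) t = latticeCount (q * r) (s * p) (p * r * t) := by
  have hpr : (0 : ℝ) < p * r := by positivity
  unfold ehrhart latticeCount
  congr 1
  ext z
  simp only [Set.mem_ofPred_eq, ← @Nat.cast_le ℝ, Nat.cast_add, Nat.cast_mul]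
  rw [← mul_le_mul_iff_of_pos_right hpr]
  field_simp

open Polynomial in
noncomputable def trianglePoly (p q r s : ℕ) : ℚ[X] :=
  C ((p * r : ℚ) / (2 * q * s)) * X ^ 2 + C ((p * s + q * r + 1 : ℚ) / (2 * q * s)) * X + 1

theorem eval_trianglePoly (p q r s : ℕ) (t : ℚ) :
    (trianglePoly p q r s).eval t
      = (p * r * t ^ 2 + (p * s + q * r + 1) * t) / (2 * q * s) + 1 := by
  simp only [trianglePoly, Polynomial.eval_add, Polynomial.eval_mul, Polynomial.eval_C,
    Polynomial.eval_pow, Polynomial.eval_X, Polynomial.eval_one]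
  ring

noncomputable def triangleDefect (p q r s t : ℕ) : ℚ :=
  latticeCount (q * r) (s * p) (p * r * t) - (trianglePoly p q r s).eval (t : ℚ)

theorem triangleDefect_comm (p q r s : ℕ) : triangleDefect r s p q = triangleDefect p q r s := by
  ext t
  simp only [triangleDefect, eval_trianglePoly, latticeCount_comm (s * p), mul_comm r p]
  ring

theorem triangleDefect_zero {p q r s : ℕ} (hp : 0 < p) (hq : 0 < q) (hr : 0 < r) (hs : 0 < s) :
    triangleDefect p q r s 0 = 0 := by
  simp [triangleDefect, eval_trianglePoly, latticeCount_zero (mul_pos hq hr) (mul_pos hs hp)]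

theorem latticeCount_mul_mul_add {p q r s e : ℕ} (hp : 0 < p) (hq : 0 < q) (hr : 0 < r)
    (hs : 0 < s) (he : q * r + 1 = p * e) (t : ℕ) :
    latticeCount (q * r) (s * p) (p * r * (t + q)) = latticeCount (q * r) (s * p) (p * r * t)
      + ∑ i ∈ range p, ((r * t + (e - 1) + e * i) / s + 1) := by
  have he0 : 0 < e := Nat.pos_of_ne_zero (by rintro rfl; simp at he)
  rw [show p * r * (t + q) = p * r * t + p * (q * r) by ring,
    latticeCount_add_mul (mul_pos hq hr) (mul_pos hs hp)]
  refine congrArg _ (sum_congr rfl fun i hi => congrArg (· + 1) ?_)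
  have hX : p * r * t + (i + 1) * (q * r) + (i + 1) = p * (r * t + (i + 1) * e) := by
    calc _ = p * r * t + (i + 1) * (q * r + 1) := by ring
      _ = _ := by rw [he]; ring
  rw [mul_comm s p, ← Nat.div_div_eq_div_mul,
    Nat.div_eq_sub_one_of_add_eq_mul hX i.succ_pos (mem_range.1 hi), add_one_mul, mul_comm i e]
  congr 1
  omega

theorem periodic_triangleDefect {p q r s : ℕ} (hp : 0 < p) (hq : 0 < q) (hr : 0 < r) (hs : 0 < s)
    (h1 : s ∣ p) (h2 : p ∣ q * r + 1) (h3 : Nat.gcd ((q * r + 1) / p) s = 1) :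
    Function.Periodic (triangleDefect p q r s) q := by
  intro t
  obtain ⟨e, he⟩ := h2
  obtain ⟨m, hm⟩ := h1
  have hes : e.Coprime s := by rwa [he, Nat.mul_div_cancel_left _ hp] at h3
  have he0 : 0 < e := Nat.pos_of_ne_zero (by rintro rfl; simp at he)
  have hfloor := congrArg (Nat.cast : ℕ → ℚ)
    (mul_sum_range_div_add_eq_sum_of_coprime hes (r * t + (e - 1)) m)
  rw [mul_comm m, ← hm] at hfloor
  push_cast [Nat.cast_sub he0, sum_add_distrib, ← mul_sum, sum_const, card_range,
    nsmul_eq_mul] at hfloor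
  have gauss (n : ℕ) (hn : 0 < n) : (∑ i ∈ range n, (i : ℚ)) * 2 = n * (n - 1) := by
    rw [← Nat.cast_sum, ← Nat.cast_pred hn]
    exact_mod_cast sum_range_id_mul_two n
  have heQ : (q * r + 1 : ℚ) = p * e := by exact_mod_cast he
  have hmQ : (p : ℚ) = s * m := by exact_mod_cast hm
  have hs0 : (s : ℚ) ≠ 0 := by positivity
  have hq0 : (q : ℚ) ≠ 0 := by positivity
  unfold triangleDefect
  rw [latticeCount_mul_mul_add hp hq hr hs he, eval_trianglePoly, eval_trianglePoly]
  push_cast [Nat.cast_sub he0, sum_add_distrib, sum_const, card_range, nsmul_eq_mul]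
  field_simp
  linear_combination 2 * q * hfloor + q * e * gauss p hp - q * m * gauss s hs
    - q * (1 + p) * heQ + (q * s - q) * hmQ

theorem stmt_12_general (p q r s : ℕ) (hp : 0 < p) (hq : 0 < q) (hr : 0 < r) (hs : 0 < s)
    (hpq : Nat.gcd p q = 1)
    (h1 : s ∣ p) (h2 : p ∣ (r * q + 1)) (h3 : Nat.gcd ((r * q + 1) / p) s = 1)
    (h4 : q ∣ r) (h5 : r ∣ (s * p + 1)) (h6 : Nat.gcd ((s * p + 1) / r) q = 1) :
    ∃ P : Polynomial ℚ, ∀ t : ℕ, 0 < t →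
      (ehrhart ((q : ℝ) / p) ((s : ℝ) / r) t : ℚ) = P.eval (t : ℚ) := by
  rw [mul_comm r q] at h2 h3
  have hper_q := periodic_triangleDefect hp hq hr hs h1 h2 h3
  have hper_s := triangleDefect_comm p q r s ▸ periodic_triangleDefect hr hs hp hq h4 h5 h6
  have hqs : q.Coprime s := (Nat.coprime_comm.mp hpq).coprime_dvd_right h1
  refine ⟨trianglePoly p q r s, fun t _ => ?_⟩
  have h := hper_q.eq_of_coprime hper_s hqs t
  rw [triangleDefect_zero hp hq hr hs, triangleDefect, sub_eq_zero] at h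
  rw [ehrhart_div_div p q r s t hp hr, h]

/-- Sufficient criterion for the triangle with vertices `(0,0), (p/q,0), (0,r/s)`
to be pseudo-integral. -/
theorem stmt_12 (p q r s : ℕ) (hp : 0 < p) (hq : 0 < q) (hr : 0 < r) (hs : 0 < s)
    (hpq : Nat.gcd p q = 1) (hrs : Nat.gcd r s = 1)
    (h1 : s ∣ p) (h2 : p ∣ (r * q + 1)) (h3 : Nat.gcd ((r * q + 1) / p) s = 1)
    (h4 : q ∣ r) (h5 : r ∣ (s * p + 1)) (h6 : Nat.gcd ((s * p + 1) / r) q = 1) :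
    ∃ P : Polynomial ℚ, ∀ t : ℕ, 0 < t →
      (ehrhart ((q : ℝ) / p) ((s : ℝ) / r) t : ℚ) = P.eval (t : ℚ) :=
  stmt_12_general p q r s hp hq hr hs hpq h1 h2 h3 h4 h5 h6
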